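/- The canonical closure has the same Fine interior as the original polytope: for a full-dimensional lattice polytope Δ with dim F(Δ) = dim Δ, F(C(Δ)) = F(Δ). -/

import Mathlib

noncomputable section

def pairing {n : ℕ} (x : Fin n → ℝ) (ν : Fin n → ℤ) : ℝ := ∑ i, x i * (ν i : ℝ)

def IsLatticePoint {n : ℕ} (x : Fin n → ℝ) : Prop := ∀ i, ∃ z : ℤ, x i = (z : ℝ)

/-- `ord_P(ν) := inf_{x ∈ P} ⟨x, ν⟩`. -/
def ordS {n : ℕ} (P : Set (Fin n → ℝ)) (ν : Fin n → ℤ) : ℝ :=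
  sInf ((fun m => pairing m ν) '' P)

/-- The Fine interior `F(Δ) := {x | ⟨x,ν⟩ ≥ ord_Δ(ν)+1 ∀ ν ∈ N\{0}}`. -/
def FineInterior {n : ℕ} (Δ : Set (Fin n → ℝ)) : Set (Fin n → ℝ) :=
  { x | ∀ ν : Fin n → ℤ, ν ≠ 0 → ordS Δ ν + 1 ≤ pairing x ν }

/-- The support `S_F(Δ) := {ν ∈ N\{0} : ord_{F(Δ)}(ν) = ord_Δ(ν)+1}`. -/
def SuppF {n : ℕ} (Δ : Set (Fin n → ℝ)) : Set (Fin n → ℤ) :=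
  { ν | ν ≠ 0 ∧ ordS (FineInterior Δ) ν = ordS Δ ν + 1 }

/-- The canonical closure `C(Δ) := {x | ⟨x,ν⟩ ≥ ord_Δ(ν) ∀ ν ∈ S_F(Δ)}`. -/
def CanClosure {n : ℕ} (Δ : Set (Fin n → ℝ)) : Set (Fin n → ℝ) :=
  { x | ∀ ν ∈ SuppF Δ, ordS Δ ν ≤ pairing x ν }

/-!
Points of the Fine interior `F(K)` of a compact set `K` lie strictly inside `K` in every real
direction `u` (approximate `u` by lattice vectors `ν / N`), with a gap proportional to `‖u‖`.
Hence near a point of `F(K)` only finitely many lattice normals are relevant, and `F(K)` is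
relatively clopen in the convex set cut out by the normals in `S_F(K)`: the two coincide.
A homothety centred at an interior point of `F(K)` maps `C(K)` into `F(K)`, so `C(K)` is bounded
in every lattice direction; then `ord_{C(K)} ≤ ord_K`, with equality on `S_F(K)`, which gives
`F(C(K)) = F(K)`.
-/

open Set Filter Topology Metric

section DotProduct

variable {n : ℕ}

theorem abs_dotProduct_le (x y : Fin n → ℝ) : |x ⬝ᵥ y| ≤ n * (‖x‖ * ‖y‖) := by
  calc |x ⬝ᵥ y| ≤ ∑ i, |x i * y i| := Finset.abs_sum_le_sum_abs _ _
    _ ≤ ∑ _i : Fin n, ‖x‖ * ‖y‖ := Finset.sum_le_sum fun i _ => by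
        rw [abs_mul]
        exact mul_le_mul (norm_le_pi_norm x i) (norm_le_pi_norm y i) (abs_nonneg _) (norm_nonneg _)
    _ = n * (‖x‖ * ‖y‖) := by simp

-- Simultaneous Dirichlet approximation, without the rate.
theorem exists_nat_smul_sub_intCast_norm_lt (u : Fin n → ℝ) {ε : ℝ} (hε : 0 < ε) :
    ∃ N : ℕ, 0 < N ∧ ∃ ν : Fin n → ℤ, ‖(N : ℝ) • u - Int.cast ∘ ν‖ < ε := by
  set a : ℕ → Fin n → ℝ := fun k i => Int.fract (k * u i)
  have ha : ∀ k, a k ∈ closedBall 0 1 := fun k => by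
    rw [mem_closedBall_zero_iff, pi_norm_le_iff_of_nonneg zero_le_one]
    intro i
    rw [Real.norm_eq_abs, abs_of_nonneg (Int.fract_nonneg _)]
    exact (Int.fract_lt_one _).le
  obtain ⟨_, -, φ, hφ, hlim⟩ := tendsto_subseq_of_bounded isBounded_closedBall ha
  obtain ⟨j, hj⟩ := Metric.cauchySeq_iff'.1 (Tendsto.cauchySeq hlim) ε hε
  have hlt : φ j < φ (j + 1) := hφ j.lt_succ_self
  refine ⟨φ (j + 1) - φ j, Nat.sub_pos_of_lt hlt,
    fun i => ⌊φ (j + 1) * u i⌋ - ⌊φ j * u i⌋, ?_⟩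
  have hclose : ‖a (φ (j + 1)) - a (φ j)‖ < ε := by
    simpa only [dist_eq_norm, Function.comp_apply] using hj (j + 1) j.le_succ
  convert hclose using 2
  ext i
  simp only [a, Int.fract, Nat.cast_sub hlt.le, Function.comp_apply, Pi.sub_apply, Pi.smul_apply,
    smul_eq_mul, Int.cast_sub]
  ring

theorem finite_setOf_norm_intCast_le (B : ℝ) :
    {ν : Fin n → ℤ | ‖(Int.cast ∘ ν : Fin n → ℝ)‖ ≤ B}.Finite := by
  have hnorm : ∀ ν : Fin n → ℤ, ‖(Int.cast ∘ ν : Fin n → ℝ)‖ = ‖ν‖ := fun ν => by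
    simp only [Pi.norm_def, Function.comp_apply]
    congr
  simpa only [hnorm, ← mem_closedBall_zero_iff, ofPred_mem_eq] using
    (isCompact_closedBall (0 : Fin n → ℤ) B).finite_of_discrete

end DotProduct

/-- `ord_K` extended to real directions, so that `ordS K ν = ordReal K ν`. -/
def ordReal {n : ℕ} (K : Set (Fin n → ℝ)) (u : Fin n → ℝ) : ℝ :=
  sInf ((· ⬝ᵥ u) '' K)

section OrdReal

variable {n : ℕ} {K : Set (Fin n → ℝ)}

theorem pairing_eq_dotProduct (x : Fin n → ℝ) (ν : Fin n → ℤ) :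
    pairing x ν = x ⬝ᵥ (Int.cast ∘ ν) := rfl

theorem ordS_eq_ordReal (K : Set (Fin n → ℝ)) (ν : Fin n → ℤ) :
    ordS K ν = ordReal K (Int.cast ∘ ν) := rfl

theorem IsCompact.bddBelow_image_dotProduct (hK : IsCompact K) (u : Fin n → ℝ) :
    BddBelow ((· ⬝ᵥ u) '' K) :=
  (hK.image (continuous_id.dotProduct continuous_const)).bddBelow

theorem ordReal_le_dotProduct (hK : IsCompact K) {x : Fin n → ℝ} (hx : x ∈ K) (u : Fin n → ℝ) :
    ordReal K u ≤ x ⬝ᵥ u :=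
  csInf_le (hK.bddBelow_image_dotProduct u) (mem_image_of_mem _ hx)

theorem le_ordReal (hne : K.Nonempty) {u : Fin n → ℝ} {a : ℝ} (h : ∀ x ∈ K, a ≤ x ⬝ᵥ u) :
    a ≤ ordReal K u :=
  le_csInf (hne.image _) (forall_mem_image.2 h)

theorem exists_dotProduct_eq_ordReal (hK : IsCompact K) (hne : K.Nonempty) (u : Fin n → ℝ) :
    ∃ x ∈ K, x ⬝ᵥ u = ordReal K u :=
  (hK.image (continuous_id.dotProduct continuous_const)).sInf_mem (hne.image _)

theorem continuous_ordReal (hK : IsCompact K) : Continuous (ordReal K) :=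
  hK.continuous_sInf (f := fun u x => x ⬝ᵥ u) (continuous_snd.dotProduct continuous_fst)

theorem ordReal_smul {c : ℝ} (hc : 0 ≤ c) (u : Fin n → ℝ) :
    ordReal K (c • u) = c * ordReal K u := by
  rw [ordReal, ordReal, ← smul_eq_mul, ← Real.sInf_smul_of_nonneg hc, ← image_smul, image_image]
  simp only [dotProduct_smul, smul_eq_mul]

end OrdReal

section FineInterior

variable {n : ℕ} {K : Set (Fin n → ℝ)}

theorem isClosed_fineInterior (K : Set (Fin n → ℝ)) : IsClosed (FineInterior K) := by
  simp only [FineInterior, ofPred_forall]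
  exact isClosed_iInter fun ν => isClosed_iInter fun _ =>
    isClosed_le continuous_const (continuous_id.dotProduct continuous_const)

theorem ordS_add_one_lt_pairing_of_notMem_suppF {z : Fin n → ℝ} (hz : z ∈ FineInterior K)
    {ν : Fin n → ℤ} (hν : ν ≠ 0) (hνS : ν ∉ SuppF K) : ordS K ν + 1 < pairing z ν := by
  have hle : ordS K ν + 1 ≤ ordS (FineInterior K) ν :=
    le_csInf (Set.Nonempty.image _ ⟨z, hz⟩)
      (forall_mem_image.2 fun y hy => hy ν hν)
  have hne : ordS K ν + 1 ≠ ordS (FineInterior K) ν := fun h => hνS ⟨hν, h.symm⟩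
  exact (hle.lt_of_ne hne).trans_le <|
    csInf_le ⟨_, forall_mem_image.2 fun y hy => hy ν hν⟩ (mem_image_of_mem _ hz)

theorem ordReal_lt_dotProduct_of_mem_fineInterior (hK : IsCompact K) (hne : K.Nonempty)
    {z : Fin n → ℝ} (hz : z ∈ FineInterior K) {u : Fin n → ℝ} (hu : u ≠ 0) :
    ordReal K u < z ⬝ᵥ u := by
  obtain ⟨R, hR, hKR⟩ := hK.isBounded.exists_pos_norm_le
  have hD : 0 ≤ n * (R + ‖z‖) := by positivity
  set ε : ℝ := min (‖u‖ / 2) (1 / (n * (R + ‖z‖) + 1))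
  have hε : 0 < ε := lt_min (by positivity) (by positivity)
  have hεu : ε < ‖u‖ := (min_le_left _ _).trans_lt (half_lt_self (norm_pos_iff.2 hu))
  have hεD : n * (R + ‖z‖) * ε < 1 := by
    calc n * (R + ‖z‖) * ε ≤ n * (R + ‖z‖) * (1 / (n * (R + ‖z‖) + 1)) :=
          mul_le_mul_of_nonneg_left (min_le_right _ _) hD
      _ < 1 := by rw [mul_one_div, div_lt_one (by positivity)]; linarith
  -- With `ν ≈ N • u`, the gap `1` at `ν` gives `N * (z ⬝ᵥ u - ordReal K u) ≥ 1 - n (R + ‖z‖) ε`.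
  obtain ⟨N, hN, ν, hν⟩ := exists_nat_smul_sub_intCast_norm_lt u hε
  set w : Fin n → ℝ := (N : ℝ) • u - Int.cast ∘ ν
  have hνw : (Int.cast ∘ ν : Fin n → ℝ) = (N : ℝ) • u - w := by simp only [w, sub_sub_cancel]
  have hN1 : (1 : ℝ) ≤ N := Nat.one_le_cast.2 hN
  have hν0 : ν ≠ 0 := by
    rintro rfl
    have hw : ‖w‖ = N * ‖u‖ := by simp [w, norm_smul]
    nlinarith [norm_nonneg u]
  have hKν : N * ordReal K u - n * R * ε ≤ ordReal K (Int.cast ∘ ν) := le_ordReal hne fun v hv => by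
    have hvw := (abs_le.1 (abs_dotProduct_le v w)).2
    have hvR := hKR v hv
    have : (n : ℝ) * (‖v‖ * ‖w‖) ≤ n * (R * ε) := by gcongr
    rw [hνw, dotProduct_sub, dotProduct_smul, smul_eq_mul]
    nlinarith [ordReal_le_dotProduct hK hv u]
  have hzν : z ⬝ᵥ (Int.cast ∘ ν) ≤ N * (z ⬝ᵥ u) + n * ‖z‖ * ε := by
    have hzw := (abs_le.1 (abs_dotProduct_le z w)).1
    have : (n : ℝ) * (‖z‖ * ‖w‖) ≤ n * (‖z‖ * ε) := by gcongr
    rw [hνw, dotProduct_sub, dotProduct_smul, smul_eq_mul]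
    nlinarith
  have hgap : 0 < (N : ℝ) * (z ⬝ᵥ u - ordReal K u) := by
    have hzF : ordReal K (Int.cast ∘ ν) + 1 ≤ z ⬝ᵥ (Int.cast ∘ ν) := hz ν hν0
    linarith
  exact sub_pos.1 (pos_of_mul_pos_right hgap (Nat.cast_nonneg N))

theorem exists_pos_mul_norm_le_dotProduct_sub_ordReal (hK : IsCompact K) (hne : K.Nonempty)
    {z : Fin n → ℝ} (hz : z ∈ FineInterior K) :
    ∃ c > 0, ∀ u, c * ‖u‖ ≤ z ⬝ᵥ u - ordReal K u := by
  set g : (Fin n → ℝ) → ℝ := fun u => z ⬝ᵥ u - ordReal K u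
  have hg : Continuous g := (continuous_const.dotProduct continuous_id).sub (continuous_ordReal hK)
  obtain ⟨c, hc, hcg⟩ : ∃ c > 0, ∀ w ∈ sphere (0 : Fin n → ℝ) 1, c ≤ g w := by
    rcases (sphere (0 : Fin n → ℝ) 1).eq_empty_or_nonempty with h | h
    · exact ⟨1, one_pos, by simp [h]⟩
    · obtain ⟨w₀, hw₀, hmin⟩ := (isCompact_sphere 0 1).exists_isMinOn h hg.continuousOn
      exact ⟨g w₀, sub_pos.2 (ordReal_lt_dotProduct_of_mem_fineInterior hK hne hz
        (ne_zero_of_mem_unit_sphere ⟨w₀, hw₀⟩)), hmin⟩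
  refine ⟨c, hc, fun u => ?_⟩
  rcases eq_or_ne u 0 with rfl | hu
  · have h0 : ordReal K 0 = 0 := by simpa using ordReal_smul (K := K) le_rfl 0
    simp [h0]
  · have hcu := hcg (‖u‖⁻¹ • u) (by simp [norm_smul, hu])
    simp only [g, dotProduct_smul, ordReal_smul (inv_nonneg.2 (norm_nonneg u)), smul_eq_mul,
      ← mul_sub] at hcu
    rwa [le_inv_mul_iff₀ (norm_pos_iff.2 hu), mul_comm] at hcu

theorem exists_eventually_ordS_add_one_le_pairing (hK : IsCompact K) (hne : K.Nonempty)
    {z : Fin n → ℝ} (hz : z ∈ FineInterior K) :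
    ∃ B, ∀ᶠ y in 𝓝 z, ∀ ν : Fin n → ℤ, B < ‖(Int.cast ∘ ν : Fin n → ℝ)‖ →
      ordS K ν + 1 ≤ pairing y ν := by
  obtain ⟨c, hc, hcz⟩ := exists_pos_mul_norm_le_dotProduct_sub_ordReal hK hne hz
  refine ⟨2 / c, ?_⟩
  filter_upwards [ball_mem_nhds z (by positivity : 0 < c / (2 * (n + 1)))] with y hy ν hν
  set u : Fin n → ℝ := Int.cast ∘ ν
  have hyz : (n : ℝ) * ‖y - z‖ ≤ c / 2 := by
    rw [mem_ball, dist_eq_norm] at hy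
    calc (n : ℝ) * ‖y - z‖ ≤ (n + 1) * (c / (2 * (n + 1))) := by gcongr; linarith
      _ = c / 2 := by field_simp
  have hyzu : |(y - z) ⬝ᵥ u| ≤ c / 2 * ‖u‖ :=
    (abs_dotProduct_le _ _).trans (by rw [← mul_assoc]; gcongr)
  have hu : 1 < c / 2 * ‖u‖ := by
    rw [div_lt_iff₀ hc] at hν
    linarith
  show ordReal K u + 1 ≤ y ⬝ᵥ u
  have hyu : y ⬝ᵥ u = z ⬝ᵥ u + (y - z) ⬝ᵥ u := by rw [sub_dotProduct]; ring
  linarith [hcz u, (abs_le.1 hyzu).1]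

theorem eventually_mem_fineInterior (hK : IsCompact K) (hne : K.Nonempty) {z : Fin n → ℝ}
    (hz : z ∈ FineInterior K) :
    ∀ᶠ y in 𝓝 z, (∀ ν ∈ SuppF K, ordS K ν + 1 ≤ pairing y ν) → y ∈ FineInterior K := by
  obtain ⟨B, hB⟩ := exists_eventually_ordS_add_one_le_pairing hK hne hz
  set Φ : Set (Fin n → ℤ) :=
    {ν | ν ≠ 0 ∧ ν ∉ SuppF K} ∩ {ν | ‖(Int.cast ∘ ν : Fin n → ℝ)‖ ≤ B}
  have hΦ : ∀ᶠ y in 𝓝 z, ∀ ν ∈ Φ, ordS K ν + 1 < pairing y ν :=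
    (eventually_all_finite ((finite_setOf_norm_intCast_le B).subset inter_subset_right)).2
      fun ν hν => (continuous_id.dotProduct continuous_const).continuousAt.eventually_const_lt
        (ordS_add_one_lt_pairing_of_notMem_suppF hz hν.1.1 hν.1.2)
  filter_upwards [hB, hΦ] with y hyB hyΦ hyS ν hν
  by_cases hνS : ν ∈ SuppF K
  · exact hyS ν hνS
  by_cases hνB : B < ‖(Int.cast ∘ ν : Fin n → ℝ)‖
  · exact hyB ν hνB
  · exact (hyΦ ν ⟨⟨hν, hνS⟩, not_lt.1 hνB⟩).le

theorem mem_fineInterior_iff (hK : IsCompact K) (hne : K.Nonempty)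
    (hF : (FineInterior K).Nonempty) {x : Fin n → ℝ} :
    x ∈ FineInterior K ↔ ∀ ν ∈ SuppF K, ordS K ν + 1 ≤ pairing x ν := by
  refine ⟨fun hx ν hν => hx ν hν.1, fun hx => ?_⟩
  obtain ⟨x₀, hx₀⟩ := hF
  -- `F(K)` is closed and, by `eventually_mem_fineInterior`, relatively open in this convex set.
  have hconvex : Convex ℝ {y | ∀ ν ∈ SuppF K, ordS K ν + 1 ≤ pairing y ν} := by
    simp only [ofPred_forall]
    exact convex_iInter₂ fun ν _ => convex_halfSpace_ge
      ⟨fun a b => add_dotProduct a b _, fun c a => smul_dotProduct c a _⟩ _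
  refine (hconvex.isPreconnected.induction₂ (fun a b => a ∈ FineInterior K ↔ b ∈ FineInterior K)
    (fun z _ => ?_) (fun _ _ _ _ _ _ => Iff.trans) (fun _ _ _ _ => Iff.symm)
    (fun ν hν => hx₀ ν hν.1) hx).1 hx₀
  by_cases hz : z ∈ FineInterior K
  · filter_upwards [nhdsWithin_le_nhds (eventually_mem_fineInterior hK hne hz),
      self_mem_nhdsWithin] with y hy hyS using iff_of_true hz (hy hyS)
  · filter_upwards [nhdsWithin_le_nhds ((isClosed_fineInterior K).isOpen_compl.mem_nhds hz)]
      with y hy using iff_of_false hz hy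

end FineInterior

section CanClosure

variable {n : ℕ} {K : Set (Fin n → ℝ)} {x₀ : Fin n → ℝ} {ρ : ℝ}

theorem subset_canClosure (hK : IsCompact K) : K ⊆ CanClosure K := fun _ hx _ _ =>
  ordReal_le_dotProduct hK hx _

theorem pairing_lineMap (x y : Fin n → ℝ) (t : ℝ) (ν : Fin n → ℤ) :
    pairing (AffineMap.lineMap x y t) ν = (1 - t) * pairing x ν + t * pairing y ν := by
  simp only [AffineMap.lineMap_apply_module, pairing_eq_dotProduct, add_dotProduct,
    smul_dotProduct, smul_eq_mul]

theorem ordS_add_one_add_le_pairing (hρ : 0 ≤ ρ) (hball : closedBall x₀ ρ ⊆ FineInterior K)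
    {ν : Fin n → ℤ} (hν : ν ≠ 0) : ordS K ν + 1 + ρ ≤ pairing x₀ ν := by
  obtain ⟨i, hi⟩ := Function.ne_iff.1 hν
  set e : Fin n → ℝ := Pi.single i ((ν i).sign : ℝ)
  have he : ‖e‖ = 1 := by
    rw [Pi.norm_single, Real.norm_eq_abs, ← Int.cast_abs, Int.abs_sign_of_ne_zero hi, Int.cast_one]
  have hmem : x₀ - ρ • e ∈ closedBall x₀ ρ := by
    rw [mem_closedBall, dist_eq_norm, sub_sub_cancel_left, norm_neg, norm_smul, he,
      Real.norm_of_nonneg hρ, mul_one]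
  have hpair : pairing (x₀ - ρ • e) ν = pairing x₀ ν - ρ * |(ν i : ℝ)| := by
    simp only [pairing_eq_dotProduct, sub_dotProduct, smul_dotProduct, e, single_dotProduct,
      Function.comp_apply, smul_eq_mul]
    rw [← Int.cast_abs, ← Int.sign_mul_self_eq_abs, Int.cast_mul]
  have hνi : (1 : ℝ) ≤ |(ν i : ℝ)| := by exact_mod_cast Int.one_le_abs hi
  have := hball hmem ν hν
  rw [hpair] at this
  nlinarith

theorem lineMap_mem_fineInterior_of_mem_canClosure (hK : IsCompact K) (hne : K.Nonempty)
    (hρ : 0 < ρ) (hball : closedBall x₀ ρ ⊆ FineInterior K) {y : Fin n → ℝ}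
    (hy : y ∈ CanClosure K) : AffineMap.lineMap x₀ y (ρ / (1 + ρ)) ∈ FineInterior K := by
  rw [mem_fineInterior_iff hK hne ⟨x₀, hball (mem_closedBall_self hρ.le)⟩]
  intro ν hν
  have h₀ := ordS_add_one_add_le_pairing hρ.le hball hν.1
  have h₁ := hy ν hν
  rw [pairing_lineMap, ← sub_nonneg]
  have key : (1 - ρ / (1 + ρ)) * pairing x₀ ν + ρ / (1 + ρ) * pairing y ν - (ordS K ν + 1) =
      ((pairing x₀ ν - (ordS K ν + 1 + ρ)) + ρ * (pairing y ν - ordS K ν)) / (1 + ρ) := by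
    field_simp
    ring
  rw [key]
  have : 0 ≤ ρ * (pairing y ν - ordS K ν) := mul_nonneg hρ.le (sub_nonneg.2 h₁)
  exact div_nonneg (by linarith) (by linarith)

theorem ordS_canClosure_le (hK : IsCompact K) (hne : K.Nonempty) (hρ : 0 < ρ)
    (hball : closedBall x₀ ρ ⊆ FineInterior K) {ν : Fin n → ℤ} (hν : ν ≠ 0) :
    ordS (CanClosure K) ν ≤ ordS K ν := by
  set t := ρ / (1 + ρ)
  have ht : 0 < t := by positivity
  have hbdd : BddBelow ((pairing · ν) '' CanClosure K) := by
    refine ⟨(ordS K ν + 1 - (1 - t) * pairing x₀ ν) / t, forall_mem_image.2 fun y hy => ?_⟩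
    have := lineMap_mem_fineInterior_of_mem_canClosure hK hne hρ hball hy ν hν
    rw [pairing_lineMap] at this
    rw [div_le_iff₀ ht]
    linarith
  obtain ⟨v, hv, hvν⟩ := exists_dotProduct_eq_ordReal hK hne (Int.cast ∘ ν)
  rw [ordS_eq_ordReal K, ← hvν]
  exact csInf_le hbdd (mem_image_of_mem _ (subset_canClosure hK hv))

theorem ordS_le_ordS_canClosure (hK : IsCompact K) (hne : K.Nonempty) {ν : Fin n → ℤ}
    (hν : ν ∈ SuppF K) : ordS K ν ≤ ordS (CanClosure K) ν :=
  le_csInf ((hne.mono (subset_canClosure hK)).image _) (forall_mem_image.2 fun _ hy => hy ν hν)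

theorem fineInterior_canClosure_of_isCompact (hK : IsCompact K) (hne : K.Nonempty)
    (hF : (interior (FineInterior K)).Nonempty) :
    FineInterior (CanClosure K) = FineInterior K := by
  obtain ⟨x₀, hx₀⟩ := hF
  obtain ⟨ρ, hρ, hball⟩ := nhds_basis_closedBall.mem_iff.1 (mem_interior_iff_mem_nhds.1 hx₀)
  ext x
  refine ⟨fun hx => (mem_fineInterior_iff hK hne ⟨x₀, interior_subset hx₀⟩).2 fun ν hν => ?_,
    fun hx ν hν => ?_⟩
  · linarith [ordS_le_ordS_canClosure hK hne hν, hx ν hν.1]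
  · linarith [ordS_canClosure_le hK hne hρ hball hν, hx ν hν]

end CanClosure

theorem fineInterior_canClosure_general {n : ℕ}
    (V : Finset (Fin n → ℝ))
    (Δ : Set (Fin n → ℝ)) (hΔ : Δ = convexHull ℝ (V : Set (Fin n → ℝ)))
    (hfull : (interior Δ).Nonempty)
    (hFfull : (interior (FineInterior Δ)).Nonempty) :
    FineInterior (CanClosure Δ) = FineInterior Δ :=
  fineInterior_canClosure_of_isCompact (hΔ ▸ V.finite_toSet.isCompact_convexHull (𝕜 := ℝ))
    (hfull.mono interior_subset) hFfull

/-- The canonical closure has the same Fine interior as the original polytope: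
for a full-dimensional lattice polytope `Δ` with `dim F(Δ) = dim Δ`
(i.e. the Fine interior is also full-dimensional), `F(C(Δ)) = F(Δ)`. -/
theorem fineInterior_canClosure {n : ℕ}
    (V : Finset (Fin n → ℝ)) (hV : ∀ v ∈ V, IsLatticePoint v)
    (Δ : Set (Fin n → ℝ)) (hΔ : Δ = convexHull ℝ (V : Set (Fin n → ℝ)))
    (hfull : (interior Δ).Nonempty)
    (hFfull : (interior (FineInterior Δ)).Nonempty) :
    FineInterior (CanClosure Δ) = FineInterior Δ :=
  fineInterior_canClosure_general V Δ hΔ hfull hFfull
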